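/- Let V be a finite-dimensional real vector space. A 4-linear map T : V^4 → ℝ is an algebraic curvature tensor if and only if (1/12)·y_t*T = T, where y_t is the Young symmetrizer of the standard tableau t with rows {1,3} and {2,4}. -/

import Mathlib

/-- Action of a group ring element `a ∈ ℝ[S_r]` on an `r`-multilinear map:
`(aT)(v₁,…,v_r) = Σ_p a(p)·T(v_{p(1)},…,v_{p(r)})`. -/
noncomputable def gact {V : Type} [AddCommGroup V] [Module ℝ V] {r : ℕ}
    (a : MonoidAlgebra ℝ (Equiv.Perm (Fin r)))
    (T : MultilinearMap ℝ (fun _ : Fin r => V) ℝ) :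
    MultilinearMap ℝ (fun _ : Fin r => V) ℝ :=
  ∑ p : Equiv.Perm (Fin r), a.coeff p • T.domDomCongr p
/-- The star map `a* := Σ_p a(p)·p⁻¹` on the group ring `ℝ[S_r]`. -/
noncomputable def astar {r : ℕ} (a : MonoidAlgebra ℝ (Equiv.Perm (Fin r))) :
    MonoidAlgebra ℝ (Equiv.Perm (Fin r)) :=
  MonoidAlgebra.ofCoeff (Finsupp.equivFunOnFinite.symm (fun p => a.coeff p⁻¹))
/-- The Young symmetrizer `y_t = Σ_{p∈H_t} Σ_{q∈V_t} sign(q)·(p∘q)` of the tableau with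
rows `{1,3}`, `{2,4}` (indices `0`-based in `Fin 4`):
`H_t = {id, (1 3), (2 4), (1 3)(2 4)}`, `V_t = {id, (1 2), (3 4), (1 2)(3 4)}`. -/
noncomputable def yt : MonoidAlgebra ℝ (Equiv.Perm (Fin 4)) :=
  (MonoidAlgebra.single 1 1 + MonoidAlgebra.single (Equiv.swap 0 2) 1 +
     MonoidAlgebra.single (Equiv.swap 1 3) 1 +
     MonoidAlgebra.single (Equiv.swap 0 2 * Equiv.swap 1 3) 1) *
  (MonoidAlgebra.single 1 1 - MonoidAlgebra.single (Equiv.swap 0 1) 1 -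
     MonoidAlgebra.single (Equiv.swap 2 3) 1 +
     MonoidAlgebra.single (Equiv.swap 0 1 * Equiv.swap 2 3) 1)

/-! Expanding `y_t*` into sixteen signed permutations writes `(y_t* T)(w,x,y,z)` as an explicit
signed sum of sixteen values of `T` (`youngSum`). This sum satisfies the three curvature
identities identically in `T`, so every solution of `(1/12)·y_t*T = T` is a curvature tensor.
Conversely, for a curvature tensor `R` the four groups of four terms collapse, by the symmetries
and the Bianchi identity, to `4R`, `2R`, `2R` and `4R`. -/

section GroupRingAction

variable {V : Type} [AddCommGroup V] [Module ℝ V] {r : ℕ}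

lemma gact_add (a b : MonoidAlgebra ℝ (Equiv.Perm (Fin r)))
    (T : MultilinearMap ℝ (fun _ : Fin r => V) ℝ) :
    gact (a + b) T = gact a T + gact b T := by
  simp only [gact, MonoidAlgebra.coeff_add, Finsupp.add_apply, add_smul, Finset.sum_add_distrib]

lemma gact_sub (a b : MonoidAlgebra ℝ (Equiv.Perm (Fin r)))
    (T : MultilinearMap ℝ (fun _ : Fin r => V) ℝ) :
    gact (a - b) T = gact a T - gact b T := by
  simp only [gact, MonoidAlgebra.coeff_sub, Finsupp.sub_apply, ← Finset.sum_sub_distrib]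
  refine Finset.sum_congr rfl fun p _ => ?_
  ext v
  simp only [smul_apply, MultilinearMap.domDomCongr_apply, smul_eq_mul, sub_mul, sub_apply]

lemma gact_single (g : Equiv.Perm (Fin r)) (c : ℝ)
    (T : MultilinearMap ℝ (fun _ : Fin r => V) ℝ) :
    gact (MonoidAlgebra.single g c) T = c • T.domDomCongr g := by
  simp [gact, MonoidAlgebra.coeff_single, Finsupp.single_apply]

lemma astar_add (a b : MonoidAlgebra ℝ (Equiv.Perm (Fin r))) :
    astar (a + b) = astar a + astar b := by
  ext p; simp [astar]

lemma astar_sub (a b : MonoidAlgebra ℝ (Equiv.Perm (Fin r))) :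
    astar (a - b) = astar a - astar b := by
  ext p; simp [astar]

lemma astar_single (g : Equiv.Perm (Fin r)) (c : ℝ) :
    astar (MonoidAlgebra.single g c) = MonoidAlgebra.single g⁻¹ c := by
  ext p
  simp [astar, MonoidAlgebra.coeff_single, Finsupp.single_apply, inv_eq_iff_eq_inv]

end GroupRingAction

section YoungSymmetrizer

variable {V : Type} [AddCommGroup V] [Module ℝ V]

lemma domDomCongr_apply_fin_four (T : MultilinearMap ℝ (fun _ : Fin 4 => V) ℝ)
    (σ : Equiv.Perm (Fin 4)) (v : Fin 4 → V) :
    T.domDomCongr σ v = T ![v (σ 0), v (σ 1), v (σ 2), v (σ 3)] := by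
  rw [MultilinearMap.domDomCongr_apply]
  congr 1
  funext i
  fin_cases i <;> rfl

def youngSum (T : MultilinearMap ℝ (fun _ : Fin 4 => V) ℝ) (w x y z : V) : ℝ :=
  T ![w, x, y, z] - T ![x, w, y, z] - T ![w, x, z, y] + T ![x, w, z, y]
    + (T ![y, x, w, z] - T ![y, w, x, z] - T ![z, x, w, y] + T ![z, w, x, y])
    + (T ![w, z, y, x] - T ![x, z, y, w] - T ![w, y, z, x] + T ![x, y, z, w])
    + (T ![y, z, w, x] - T ![y, z, x, w] - T ![z, y, w, x] + T ![z, y, x, w])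

lemma gact_astar_yt_apply (T : MultilinearMap ℝ (fun _ : Fin 4 => V) ℝ) (v : Fin 4 → V) :
    gact (astar yt) T v = youngSum T (v 0) (v 1) (v 2) (v 3) := by
  simp only [yt, mul_add, add_mul, mul_sub, MonoidAlgebra.single_mul_single, one_mul,
    mul_one, astar_add, astar_sub, astar_single, gact_add, gact_sub, gact_single, one_smul,
    add_apply, sub_apply, domDomCongr_apply_fin_four]
  simp [Equiv.swap_apply_def, youngSum]
  ring

lemma youngSum_antisymm_right (T : MultilinearMap ℝ (fun _ : Fin 4 => V) ℝ) (w x y z : V) :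
    youngSum T w x z y = -youngSum T w x y z := by
  simp only [youngSum]; ring

lemma youngSum_swap_pairs (T : MultilinearMap ℝ (fun _ : Fin 4 => V) ℝ) (w x y z : V) :
    youngSum T y z w x = youngSum T w x y z := by
  simp only [youngSum]; ring

lemma youngSum_bianchi (T : MultilinearMap ℝ (fun _ : Fin 4 => V) ℝ) (w x y z : V) :
    youngSum T w x y z + youngSum T w y z x + youngSum T w z x y = 0 := by
  simp only [youngSum]; ring

structure IsAlgCurvatureTensor (R : MultilinearMap ℝ (fun _ : Fin 4 => V) ℝ) : Prop where
  antisymm_right : ∀ w x y z : V, R ![w, x, y, z] = -R ![w, x, z, y]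
  swap_pairs : ∀ w x y z : V, R ![w, x, y, z] = R ![y, z, w, x]
  bianchi : ∀ w x y z : V, R ![w, x, y, z] + R ![w, y, z, x] + R ![w, z, x, y] = 0

lemma isAlgCurvatureTensor_of_eq_smul_youngSum {T : MultilinearMap ℝ (fun _ : Fin 4 => V) ℝ}
    (c : ℝ) (hT : ∀ w x y z : V, T ![w, x, y, z] = c * youngSum T w x y z) :
    IsAlgCurvatureTensor T where
  antisymm_right w x y z := by
    rw [hT, hT w x z y, youngSum_antisymm_right T w x y z]
    ring
  swap_pairs w x y z := by
    rw [hT, hT y z w x, youngSum_swap_pairs]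
  bianchi w x y z := by
    rw [hT, hT w y z x, hT w z x y, ← mul_add, ← mul_add, youngSum_bianchi, mul_zero]

namespace IsAlgCurvatureTensor

variable {R : MultilinearMap ℝ (fun _ : Fin 4 => V) ℝ}

lemma antisymm_left (hR : IsAlgCurvatureTensor R) (w x y z : V) :
    R ![x, w, y, z] = -R ![w, x, y, z] := by
  rw [hR.swap_pairs x w y z, hR.antisymm_right y z x w, ← hR.swap_pairs w x y z]

lemma youngSum_eq (hR : IsAlgCurvatureTensor R) (w x y z : V) :
    youngSum R w x y z = 12 * R ![w, x, y, z] := by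
  have h12 := hR.antisymm_left
  have h34 := hR.antisymm_right
  have hsw := hR.swap_pairs
  have hb := hR.bianchi
  have first : R ![w, x, y, z] - R ![x, w, y, z] - R ![w, x, z, y] + R ![x, w, z, y] =
      4 * R ![w, x, y, z] := by
    linarith [h12 w x y z, h34 w x y z, h12 w x z y]
  have last : R ![y, z, w, x] - R ![y, z, x, w] - R ![z, y, w, x] + R ![z, y, x, w] =
      4 * R ![w, x, y, z] := by
    linarith [hsw w x y z, h34 y z w x, h12 y z w x, h12 y z x w]
  have third : R ![w, z, y, x] - R ![x, z, y, w] - R ![w, y, z, x] + R ![x, y, z, w] =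
      2 * R ![w, x, y, z] := by
    linarith [hb w x y z, hb x y z w, h34 w z x y, h34 x z w y, h12 w x y z]
  have second : R ![y, x, w, z] - R ![y, w, x, z] - R ![z, x, w, y] + R ![z, w, x, y] =
      R ![w, z, y, x] - R ![x, z, y, w] - R ![w, y, z, x] + R ![x, y, z, w] := by
    rw [hsw y x w z, hsw y w x z, hsw z x w y, hsw z w x y]
  rw [youngSum, first, second, third, last]
  ring

end IsAlgCurvatureTensor

end YoungSymmetrizer

theorem stmt_3 (V : Type) [AddCommGroup V] [Module ℝ V]
    (T : MultilinearMap ℝ (fun _ : Fin 4 => V) ℝ) :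
    ((∀ w x y z : V, T ![w, x, y, z] = - T ![w, x, z, y]) ∧
     (∀ w x y z : V, T ![w, x, y, z] = T ![y, z, w, x]) ∧
     (∀ w x y z : V, T ![w, x, y, z] + T ![w, y, z, x] + T ![w, z, x, y] = 0)) ↔
    (1/12 : ℝ) • gact (astar yt) T = T := by
  constructor
  · rintro ⟨antisymm_right, swap_pairs, bianchi⟩
    ext v
    have hv : ![v 0, v 1, v 2, v 3] = v := by ext i; fin_cases i <;> rfl
    rw [smul_apply, gact_astar_yt_apply,
      IsAlgCurvatureTensor.youngSum_eq ⟨antisymm_right, swap_pairs, bianchi⟩, hv, smul_eq_mul]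
    ring
  · intro hT
    have hR : IsAlgCurvatureTensor T :=
      isAlgCurvatureTensor_of_eq_smul_youngSum (1/12) fun w x y z : V => by
        conv_lhs => rw [← hT]
        rw [smul_apply, gact_astar_yt_apply, smul_eq_mul]
        rfl
    exact ⟨hR.antisymm_right, hR.swap_pairs, hR.bianchi⟩
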